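/- For any diagram D in [n]×[n], r_3(D) = Σ_{(i,j)} r_1(D;i,j) · r_1(D_{>i}), where the sum ranges over all boxes (i,j) ∈ D with r_1(D;i,j) > 0, r_1(D;i,j) = #{i' < i : (i',j) ∉ D}, and D_{>i} is the subdiagram of boxes of D strictly below row i. -/

import Mathlib

/-- `r₁(D; i, j)`: the number of blank boxes above `(i,j)` in column `j`. -/
def r1Box {n : ℕ} (D : Finset (Fin n × Fin n)) (i j : Fin n) : ℕ :=
  (Finset.univ.filter fun i' : Fin n => i' < i ∧ (i', j) ∉ D).card

/-- `r₁` of the part of `D` strictly below row `i`, viewed as a diagram on the rows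
strictly below row `i`: the number of configurations (A) there, i.e. triples
`(i₁, i₂, j)` with `i < i₁ < i₂`, `(i₁,j) ∉ D` and `(i₂,j) ∈ D`. -/
def r1Below {n : ℕ} (D : Finset (Fin n × Fin n)) (i : Fin n) : ℕ :=
  ((Finset.univ : Finset (Fin n × Fin n × Fin n)).filter fun t =>
    i < t.1 ∧ t.1 < t.2.1 ∧ (t.1, t.2.2) ∉ D ∧ (t.2.1, t.2.2) ∈ D).card

/-- `r₃(D)`: the number of configurations (C)/(C')/(C''): rows `i₁<i₂<i₃<i₄` and
columns `j₁, j₂` (any relative order, possibly equal) with `(i₁,j₁), (i₃,j₂)`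
blank and `(i₂,j₁), (i₄,j₂)` in `D`. -/
def r3 {n : ℕ} (D : Finset (Fin n × Fin n)) : ℕ :=
  ((Finset.univ : Finset ((Fin n × Fin n × Fin n × Fin n) × Fin n × Fin n)).filter
    fun t =>
      t.1.1 < t.1.2.1 ∧ t.1.2.1 < t.1.2.2.1 ∧ t.1.2.2.1 < t.1.2.2.2 ∧
      (t.1.1, t.2.1) ∉ D ∧ (t.1.2.1, t.2.1) ∈ D ∧
      (t.1.2.2.1, t.2.2) ∉ D ∧ (t.1.2.2.2, t.2.2) ∈ D).card

/-- For any diagram `D`,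
`r₃(D) = Σ_{(i,j) PIVOT} r₁(D; i, j) · r₁(D_{>i})`, the sum over boxes
`(i,j) ∈ D` with `r₁(D; i, j) > 0`. -/
theorem r3_eq_sum_over_pivots {n : ℕ} (D : Finset (Fin n × Fin n)) :
    r3 D = ∑ p ∈ D.filter (fun p => 0 < r1Box D p.1 p.2),
      r1Box D p.1 p.2 * r1Below D p.1 := by
  classical
  rw [Finset.sum_filter_of_ne (by
    intro p _ h
    exact Nat.pos_of_ne_zero (fun h0 => h (by rw [h0, Nat.zero_mul])))]
  rw [r3, Finset.card_eq_sum_card_fiberwise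
    (f := fun t : (Fin n × Fin n × Fin n × Fin n) × Fin n × Fin n => (t.1.2.1, t.2.1))
    (t := D) (fun t ht => by
      simp only [Finset.mem_coe, Finset.mem_filter] at ht
      exact ht.2.2.2.2.2.1)]
  refine Finset.sum_congr rfl (fun p hp => ?_)
  rw [r1Box, r1Below, ← Finset.card_product]
  refine Finset.card_bij'
    (fun t _ => (t.1.1, (t.1.2.2.1, t.1.2.2.2, t.2.2)))
    (fun b _ => ((b.1, p.1, b.2.1, b.2.2.1), (p.2, b.2.2.2))) ?hi ?hj ?li ?ri
  case hi =>
    intro t ht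
    simp only [Finset.mem_filter, Finset.mem_univ, true_and] at ht
    obtain ⟨⟨h12, h23, h34, hb1, hi2, hb3, hi4⟩, he⟩ := ht
    have he1 : t.1.2.1 = p.1 := congrArg Prod.fst he
    have he2 : t.2.1 = p.2 := congrArg Prod.snd he
    refine Finset.mk_mem_product ?_ ?_ <;>
      simp only [Finset.mem_filter, Finset.mem_univ, true_and]
    · exact ⟨he1 ▸ h12, he2 ▸ hb1⟩
    · exact ⟨he1 ▸ h23, h34, hb3, hi4⟩
  case hj =>
    intro b hb
    rw [Finset.mem_product] at hb
    obtain ⟨h1, h2⟩ := hb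
    simp only [Finset.mem_filter, Finset.mem_univ, true_and] at h1 h2 ⊢
    exact ⟨⟨h1.1, h2.1, h2.2.1, h1.2, hp, h2.2.2.1, h2.2.2.2⟩, trivial⟩
  case li =>
    intro t ht
    simp only [Finset.mem_filter, Finset.mem_univ, true_and] at ht
    obtain ⟨_, he⟩ := ht
    have h1 : t.1.2.1 = p.1 := congrArg Prod.fst he
    have h2 : t.2.1 = p.2 := congrArg Prod.snd he
    simp only [← h1, ← h2]
  case ri =>
    intro b _
    rfl
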